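/- arXiv:1804.10407 — 5 statements merged into one kernel-verified Lean document; each statement's English description precedes it below -/
import Mathlib

section
/- Under the hypotheses of the previous statement (z ∈ Θ_A, i.e., ‖z‖ = 1, |⟨Az,z⟩| = r(A), and ⟨Ax,x⟩ = 0 where z = x + y, x ∈ range(A*), y ∈ ker(A)), it follows that ‖x‖ = ‖y‖ = 1/√2, ‖Ax‖ = ‖A‖·‖x‖, and |⟨Ax, y⟩| = ‖Ax‖·‖y‖. -/
open scoped InnerProductSpace

noncomputable def toCLM {n : ℕ} (A : Matrix (Fin n) (Fin n) ℂ) :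
    EuclideanSpace ℂ (Fin n) →L[ℂ] EuclideanSpace ℂ (Fin n) :=
  Matrix.toEuclideanCLM (𝕜 := ℂ) A

noncomputable def opNorm {n : ℕ} (A : Matrix (Fin n) (Fin n) ℂ) : ℝ := ‖toCLM A‖

noncomputable def numRadius {n : ℕ} (A : Matrix (Fin n) (Fin n) ℂ) : ℝ :=
  sSup {r : ℝ | ∃ z : EuclideanSpace ℂ (Fin n), ‖z‖ = 1 ∧ r = ‖⟪z, toCLM A z⟫_ℂ‖}

/-!
Because `x ⊥ y` and `A y = 0`, `⟪z, A z⟫ = ⟪y, A x⟫`, so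
`r(A) = ‖⟪y, A x⟫‖ ≤ ‖A x‖ ‖y‖ ≤ ‖A‖ ‖x‖ ‖y‖ ≤ ‖A‖ / 2 ≤ r(A)`,
the last step being the polarization bound `‖A‖ ≤ 2 r(A)`. All these inequalities are therefore
equalities, and equality in `‖x‖ ‖y‖ ≤ (‖x‖² + ‖y‖²) / 2` forces `‖x‖ = ‖y‖ = 1/√2`.
-/

theorem Real.eq_inv_sqrt_two_of_sq_add_sq_eq_one_of_mul_eq_half {a b : ℝ} (ha : 0 ≤ a)
    (hsq : a ^ 2 + b ^ 2 = 1) (hmul : a * b = 1 / 2) : a = (√2)⁻¹ ∧ b = (√2)⁻¹ := by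
  have hab : a = b := by nlinarith [sq_nonneg (a - b)]
  subst hab
  have ha2 : a ^ 2 = 2⁻¹ := by linarith
  have : a = (√2)⁻¹ := by rw [← Real.sqrt_inv, ← ha2, Real.sqrt_sq ha]
  exact ⟨this, this⟩

namespace ContinuousLinearMap

variable {E : Type*} [NormedAddCommGroup E] [InnerProductSpace ℂ E] {T : E →L[ℂ] E} {r : ℝ}

theorem norm_inner_map_le_of_norm_inner_self_le (h : ∀ w, ‖⟪w, T w⟫_ℂ‖ ≤ r * ‖w‖ ^ 2)
    (x y : E) : ‖⟪T y, x⟫_ℂ‖ ≤ r * (‖x‖ ^ 2 + ‖y‖ ^ 2) := by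
  have h' : ∀ w, ‖⟪T w, w⟫_ℂ‖ ≤ r * ‖w‖ ^ 2 := fun w => by
    rw [norm_inner_symm]; exact h w
  have hIy : ‖Complex.I • y‖ = ‖y‖ := by simp [norm_smul]
  have hpar₁ := parallelogram_law_with_norm ℂ x y
  have hpar₂ := parallelogram_law_with_norm ℂ x (Complex.I • y)
  rw [hIy] at hpar₂
  have hsum : ‖(⟪T (x + y), x + y⟫_ℂ - ⟪T (x - y), x - y⟫_ℂ +
        Complex.I * ⟪T (x + Complex.I • y), x + Complex.I • y⟫_ℂ -
        Complex.I * ⟪T (x - Complex.I • y), x - Complex.I • y⟫_ℂ)‖ ≤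
      ‖⟪T (x + y), x + y⟫_ℂ‖ + ‖⟪T (x - y), x - y⟫_ℂ‖ +
        ‖⟪T (x + Complex.I • y), x + Complex.I • y⟫_ℂ‖ +
        ‖⟪T (x - Complex.I • y), x - Complex.I • y⟫_ℂ‖ := by
    refine (norm_sub_le _ _).trans ?_
    refine add_le_add ((norm_add_le _ _).trans (add_le_add (norm_sub_le _ _) ?_)) ?_ <;>
      simp
  have hpol := inner_map_polarization (T : E →ₗ[ℂ] E) x y
  simp only [coe_coe] at hpol
  rw [hpol, norm_div, Complex.norm_ofNat, div_le_iff₀ (by norm_num)]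
  linear_combination hsum + h' (x + y) + h' (x - y) + h' (x + Complex.I • y) +
    h' (x - Complex.I • y) + r * hpar₁ + r * hpar₂

theorem norm_le_two_mul_of_norm_inner_self_le (hr : 0 ≤ r)
    (h : ∀ w, ‖⟪w, T w⟫_ℂ‖ ≤ r * ‖w‖ ^ 2) : ‖T‖ ≤ 2 * r := by
  refine opNorm_le_of_unit_norm (by positivity) fun y hy => ?_
  rcases eq_or_ne (T y) 0 with hTy | hTy
  · rw [hTy, norm_zero]; positivity
  have hTy' : ‖T y‖ ≠ 0 := norm_ne_zero_iff.mpr hTy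
  have hunit : ‖(‖T y‖⁻¹ : ℂ) • T y‖ = 1 := by
    rw [norm_smul, norm_inv, Complex.norm_real, norm_norm, inv_mul_cancel₀ hTy']
  have := norm_inner_map_le_of_norm_inner_self_le h ((‖T y‖⁻¹ : ℂ) • T y) y
  rw [hunit, hy, inner_smul_right, inner_self_eq_norm_sq_to_K] at this
  simp only [Complex.coe_algebraMap, sq, Complex.norm_mul, norm_inv, Complex.norm_real, norm_norm,
    inv_mul_cancel_left₀ hTy'] at this
  linarith

theorem extremal_of_norm_inner_apply_eq (hT : T ≠ 0) (h : ∀ w, ‖⟪w, T w⟫_ℂ‖ ≤ r * ‖w‖ ^ 2)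
    {x y : E} (hxy : ⟪x, y⟫_ℂ = 0) (hunit : ‖x + y‖ = 1) (heq : ‖⟪y, T x⟫_ℂ‖ = r) :
    ‖x‖ = (√2)⁻¹ ∧ ‖y‖ = (√2)⁻¹ ∧ ‖T x‖ = ‖T‖ * ‖x‖ ∧ ‖⟪y, T x⟫_ℂ‖ = ‖T x‖ * ‖y‖ := by
  have hpyth : ‖x‖ ^ 2 + ‖y‖ ^ 2 = 1 := by
    simpa only [sq, hunit, one_mul] using
      (norm_add_sq_eq_norm_sq_add_norm_sq_of_inner_eq_zero x y hxy).symm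
  have hTpos : 0 < ‖T‖ := norm_pos_iff.mpr hT
  have hTle : ‖T‖ ≤ 2 * r := norm_le_two_mul_of_norm_inner_self_le (heq ▸ norm_nonneg _) h
  have hcs : ‖⟪y, T x⟫_ℂ‖ ≤ ‖T x‖ * ‖y‖ := (norm_inner_le_norm y (T x)).trans_eq (mul_comm _ _)
  have hTx : ‖T x‖ * ‖y‖ ≤ ‖T‖ * ‖x‖ * ‖y‖ := by gcongr; exact T.le_opNorm x
  have hamgm : ‖x‖ * ‖y‖ ≤ 1 / 2 := by nlinarith [sq_nonneg (‖x‖ - ‖y‖)]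
  have hhalf : ‖x‖ * ‖y‖ = 1 / 2 := by nlinarith
  have hclosed : ‖T‖ * ‖x‖ * ‖y‖ ≤ r := by rw [mul_assoc, hhalf]; linarith
  obtain ⟨hx, hy⟩ := Real.eq_inv_sqrt_two_of_sq_add_sq_eq_one_of_mul_eq_half
    (norm_nonneg x) hpyth hhalf
  have hy0 : ‖y‖ ≠ 0 := by rw [hy]; positivity
  exact ⟨hx, hy, mul_right_cancel₀ hy0 (by linarith), by linarith⟩

end ContinuousLinearMap

open ContinuousLinearMap

theorem norm_inner_toCLM_self_le_numRadius_mul {n : ℕ} (A : Matrix (Fin n) (Fin n) ℂ)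
    (w : EuclideanSpace ℂ (Fin n)) : ‖⟪w, toCLM A w⟫_ℂ‖ ≤ numRadius A * ‖w‖ ^ 2 := by
  rcases eq_or_ne w 0 with rfl | hw
  · simp
  have hbdd : BddAbove
      {r : ℝ | ∃ z : EuclideanSpace ℂ (Fin n), ‖z‖ = 1 ∧ r = ‖⟪z, toCLM A z⟫_ℂ‖} := by
    refine ⟨‖toCLM A‖, ?_⟩
    rintro r ⟨z, hz, rfl⟩
    simpa [hz] using norm_inner_le_norm z (toCLM A z) |>.trans
      (mul_le_mul_of_nonneg_left ((toCLM A).le_opNorm z) (norm_nonneg z))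
  have hw' : ‖w‖ ≠ 0 := norm_ne_zero_iff.mpr hw
  set u : EuclideanSpace ℂ (Fin n) := (‖w‖⁻¹ : ℂ) • w
  have hu : ‖u‖ = 1 := by
    rw [norm_smul, norm_inv, Complex.norm_real, norm_norm, inv_mul_cancel₀ hw']
  have hle : ‖⟪u, toCLM A u⟫_ℂ‖ ≤ numRadius A := le_csSup hbdd ⟨u, hu, rfl⟩
  have hscale : ‖⟪u, toCLM A u⟫_ℂ‖ = ‖⟪w, toCLM A w⟫_ℂ‖ / ‖w‖ ^ 2 := by
    simp only [u, map_smul, inner_smul_left, inner_smul_right, norm_mul, norm_inv, RCLike.norm_conj,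
      Complex.norm_real, norm_norm]
    field_simp
  rwa [hscale, div_le_iff₀ (by positivity)] at hle

theorem stmt4 {n : ℕ} (A : Matrix (Fin n) (Fin n) ℂ) (hA : A ≠ 0)
    (z x y : EuclideanSpace ℂ (Fin n)) (hz : ‖z‖ = 1) (hdec : z = x + y)
    (hx : x ∈ LinearMap.range (ContinuousLinearMap.adjoint (toCLM A) : EuclideanSpace ℂ (Fin n) →ₗ[ℂ] EuclideanSpace ℂ (Fin n)))
    (hy : toCLM A y = 0)
    (hmax : ‖⟪z, toCLM A z⟫_ℂ‖ = numRadius A)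
    (hxx : ⟪x, toCLM A x⟫_ℂ = 0) :
    ‖x‖ = (Real.sqrt 2)⁻¹ ∧ ‖y‖ = (Real.sqrt 2)⁻¹ ∧
      ‖toCLM A x‖ = opNorm A * ‖x‖ ∧
      ‖⟪y, toCLM A x⟫_ℂ‖ = ‖toCLM A x‖ * ‖y‖ := by
  have hT : toCLM A ≠ 0 := (map_ne_zero_iff _ Matrix.toEuclideanCLM.injective).mpr hA
  have hxy : ⟪x, y⟫_ℂ = 0 := by
    obtain ⟨w, rfl⟩ := hx
    rw [coe_coe, adjoint_inner_left, hy, inner_zero_right]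
  have hzAz : ⟪z, toCLM A z⟫_ℂ = ⟪y, toCLM A x⟫_ℂ := by
    rw [hdec, map_add, hy, add_zero, inner_add_left, hxx, zero_add]
  exact extremal_of_norm_inner_apply_eq hT (norm_inner_toCLM_self_le_numRadius_mul A) hxy
    (hdec ▸ hz) (hzAz ▸ hmax)
end

section
/- Suppose A ∈ ℂ^{n×n} is half-radial, v ∈ V_max(A) is a unit vector, u = Av/‖A‖, and α, β ∈ ℝ. Then the unit vector z̃ = (e^{iα}v + e^{iβ}u)/√2 satisfies |⟨Az̃, z̃⟩| = r(A), and the component of z̃ in range(A*) is e^{iα}v/√2 which satisfies ⟨A(e^{iα}v), e^{iα}v⟩ = 0. -/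
open scoped InnerProductSpace

/-!
Let `r` bound the numerical radius of `T` and `T v = 2r u` with `v`, `u` unit vectors (for the
matrix: `r = r(A) = ‖A‖ / 2`). For `|c| = 1` the self-adjoint operator
`P c = r - (c T + c̄ T†) / 2` is positive. Put `x c = v + c u`. Summed over the fourth roots of
unity `c`, the forms `⟪x c, P c (x c)⟫` add up to `8r - 2⟪u, T v⟫ - 2⟪T v, u⟫ = 0`, so each
vanishes, and positivity upgrades this to `P c (x c) = 0`. For `c = 1, -1, i` these vector
identities give `T† v = 0`, `T u = 0` and `T† u = 2r v`. Hence `⟪v, u⟫ = ⟪T† v, v⟫ / 2r = 0`,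
`T` maps the orthonormal pair `v, u` to `2r u, 0`, and the claims about `z̃` are a computation
in this pair.
-/

open scoped ComplexOrder ComplexConjugate

namespace ContinuousLinearMap

variable {E : Type*} [NormedAddCommGroup E] [InnerProductSpace ℂ E]

theorem norm_inner_apply_le_mul_sq_of_norm_eq_one {T : E →L[ℂ] E} {r : ℝ}
    (hT : ∀ x, ‖x‖ = 1 → ‖⟪x, T x⟫_ℂ‖ ≤ r) (x : E) : ‖⟪x, T x⟫_ℂ‖ ≤ r * ‖x‖ ^ 2 := by
  rcases eq_or_ne x 0 with rfl | hx
  · simp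
  have hx' : ‖x‖ ≠ 0 := norm_ne_zero_iff.mpr hx
  have h := hT ((‖x‖⁻¹ : ℂ) • x) (by simp [norm_smul, hx'])
  rw [map_smul, inner_smul_left, inner_smul_right, norm_mul, norm_mul, Complex.norm_conj,
    ← Complex.ofReal_inv, Complex.norm_real, Real.norm_of_nonneg (by positivity)] at h
  calc ‖⟪x, T x⟫_ℂ‖ = ‖x‖ ^ 2 * (‖x‖⁻¹ * (‖x‖⁻¹ * ‖⟪x, T x⟫_ℂ‖)) := by field_simp
    _ ≤ ‖x‖ ^ 2 * r := by gcongr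
    _ = r * ‖x‖ ^ 2 := mul_comm _ _

theorem norm_inv_sqrt_two_smul_add_smul {u v : E} (hv : ‖v‖ = 1) (hu : ‖u‖ = 1)
    (hvu : ⟪v, u⟫_ℂ = 0) {a b : ℂ} (ha : ‖a‖ = 1) (hb : ‖b‖ = 1) :
    ‖((Real.sqrt 2 : ℂ))⁻¹ • (a • v + b • u)‖ = 1 := by
  have h := norm_add_sq_eq_norm_sq_add_norm_sq_of_inner_eq_zero (𝕜 := ℂ) (a • v) (b • u)
    (by rw [inner_smul_left, inner_smul_right, hvu, mul_zero, mul_zero])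
  rw [norm_smul, norm_smul, ha, hb, hv, hu] at h
  have h2 : ‖a • v + b • u‖ = Real.sqrt 2 := by
    rw [← Real.sqrt_mul_self (norm_nonneg _), h]; norm_num
  rw [norm_smul, h2, norm_inv, Complex.norm_real, Real.norm_of_nonneg (Real.sqrt_nonneg 2),
    inv_mul_cancel₀ (by positivity)]

theorem norm_inner_inv_sqrt_two_smul_add_smul_apply {T : E →L[ℂ] E} {u v : E} {N : ℂ}
    (hu : ‖u‖ = 1) (hvu : ⟪v, u⟫_ℂ = 0) (hTv : T v = N • u) (hTu : T u = 0)
    {a b : ℂ} (ha : ‖a‖ = 1) (hb : ‖b‖ = 1) :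
    ‖⟪((Real.sqrt 2 : ℂ))⁻¹ • (a • v + b • u), T (((Real.sqrt 2 : ℂ))⁻¹ • (a • v + b • u))⟫_ℂ‖
      = ‖N‖ / 2 := by
  have hs : ‖((Real.sqrt 2 : ℂ))⁻¹‖ * ‖((Real.sqrt 2 : ℂ))⁻¹‖ = 2⁻¹ := by
    rw [norm_inv, Complex.norm_real, Real.norm_of_nonneg (Real.sqrt_nonneg 2), ← mul_inv,
      Real.mul_self_sqrt zero_le_two]
  simp only [map_smul, map_add, hTv, hTu, smul_zero, add_zero, inner_smul_left, inner_smul_right,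
    inner_add_left, hvu, inner_self_eq_one_of_norm_eq_one hu, mul_zero, zero_add, mul_one,
    norm_mul, Complex.norm_conj, ha, hb, one_mul]
  linear_combination ‖N‖ * hs

variable [CompleteSpace E]

theorem IsPositive.apply_eq_zero_of_inner_eq_zero {P : E →L[ℂ] E} (hP : P.IsPositive) {x : E}
    (hx : ⟪x, P x⟫_ℂ = 0) : P x = 0 := by
  obtain ⟨S, rfl⟩ :=
    CStarAlgebra.nonneg_iff_eq_star_mul_self.mp ((nonneg_iff_isPositive P).mpr hP)
  have hSx : S x = 0 := by
    rwa [star_eq_adjoint, mul_apply_eq_comp, adjoint_inner_right, inner_self_eq_zero] at hx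
  rw [mul_apply_eq_comp, hSx, map_zero]

theorem inner_sub_realPart_apply (T : E →L[ℂ] E) (r : ℝ) (c : ℂ) (x : E) :
    ⟪x, ((r : ℂ) • 1 - (c / 2) • T - (conj c / 2) • adjoint T) x⟫_ℂ
      = ((r * ‖x‖ ^ 2 - (c * ⟪x, T x⟫_ℂ).re : ℝ) : ℂ) := by
  have h := Complex.add_conj (c * ⟪x, T x⟫_ℂ)
  simp only [sub_apply, smul_apply, one_def, id_apply, inner_sub_right, inner_smul_right,
    adjoint_inner_right, inner_self_eq_norm_sq_to_K, ← inner_conj_symm (T x) x, map_mul] at h ⊢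
  push_cast at h ⊢
  linear_combination (-1 / 2 : ℂ) * h

theorem isPositive_sub_realPart {T : E →L[ℂ] E} {r : ℝ}
    (hT : ∀ x, ‖⟪x, T x⟫_ℂ‖ ≤ r * ‖x‖ ^ 2) {c : ℂ} (hc : ‖c‖ = 1) :
    ((r : ℂ) • 1 - (c / 2) • T - (conj c / 2) • adjoint T).IsPositive := by
  refine (isPositive_iff_complex _).mpr fun x => ?_
  rw [← inner_conj_symm, inner_sub_realPart_apply, Complex.conj_ofReal, RCLike.re_to_complex,
    Complex.ofReal_re]
  refine ⟨rfl, sub_nonneg.mpr ?_⟩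
  calc (c * ⟪x, T x⟫_ℂ).re ≤ ‖c * ⟪x, T x⟫_ℂ‖ := Complex.re_le_norm _
    _ ≤ r * ‖x‖ ^ 2 := by rw [norm_mul, hc, one_mul]; exact hT x

theorem apply_eq_zero_of_apply_eq_two_mul_smul {T : E →L[ℂ] E} {r : ℝ}
    (hT : ∀ x, ‖⟪x, T x⟫_ℂ‖ ≤ r * ‖x‖ ^ 2) {u v : E} (hv : ‖v‖ = 1) (hu : ‖u‖ = 1)
    (hTv : T v = (2 * r : ℂ) • u) :
    T u = 0 ∧ adjoint T v = 0 ∧ adjoint T u = (2 * r : ℂ) • v := by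
  set P : ℂ → E →L[ℂ] E := fun c => (r : ℂ) • 1 - (c / 2) • T - (conj c / 2) • adjoint T
  set x : ℂ → E := fun c => v + c • u
  have hP : ∀ k : Fin 4, (P (Complex.I ^ (k : ℕ))).IsPositive := fun k =>
    isPositive_sub_realPart hT (by rw [norm_pow, Complex.norm_I, one_pow])
  have hsum : ∑ k : Fin 4,
      ⟪x (Complex.I ^ (k : ℕ)), P (Complex.I ^ (k : ℕ)) (x (Complex.I ^ (k : ℕ)))⟫_ℂ = 0 := by
    simp only [Fin.sum_univ_four, Fin.coe_ofNat_eq_mod, Nat.reduceMod, pow_zero, pow_one,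
      Complex.I_sq, Complex.I_pow_three, P, x, hTv, sub_apply, smul_apply, one_def, id_apply,
      map_add, map_smul, inner_add_left, inner_add_right, inner_smul_left, inner_smul_right,
      inner_sub_right, adjoint_inner_right, inner_self_eq_one_of_norm_eq_one hv,
      inner_self_eq_one_of_norm_eq_one hu, map_mul, map_ofNat, Complex.conj_ofReal, map_one,
      map_neg, Complex.conj_I]
    linear_combination (2 * (r : ℂ) - ⟪v, T u⟫_ℂ - ⟪T u, v⟫_ℂ) * Complex.I_sq
  have hker : ∀ k : Fin 4, P (Complex.I ^ (k : ℕ)) (x (Complex.I ^ (k : ℕ))) = 0 := fun k =>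
    (hP k).apply_eq_zero_of_inner_eq_zero <|
      (Finset.sum_eq_zero_iff_of_nonneg fun k _ => (hP k).inner_nonneg_right _).mp hsum k
        (Finset.mem_univ k)
  have e₀ := hker 0
  have e₁ := hker 1
  have e₂ := hker 2
  simp only [Fin.val_zero, Fin.val_one, Fin.val_two, pow_zero, pow_one, Complex.I_sq, P, x, hTv,
    sub_apply, smul_apply, one_def, id_apply, map_add, map_smul, map_one, map_neg,
    Complex.conj_I] at e₀ e₁ e₂
  refine ⟨?_, by linear_combination (norm := module) e₂ - e₀, ?_⟩
  · linear_combination (norm := module) e₁ - e₀ - ((1 + Complex.I) / 2) • (e₂ - e₀)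
      + Complex.I_sq • ((1 / 2 : ℂ) • (T u - adjoint T u))
  · linear_combination (norm := module) ((Complex.I - 1) / 2) • (e₂ - e₀) - e₀ - e₁
      - Complex.I_sq • ((1 / 2 : ℂ) • (T u - adjoint T u))

end ContinuousLinearMap

theorem norm_inner_toCLM_le_numRadius {n : ℕ} (A : Matrix (Fin n) (Fin n) ℂ)
    {x : EuclideanSpace ℂ (Fin n)} (hx : ‖x‖ = 1) : ‖⟪x, toCLM A x⟫_ℂ‖ ≤ numRadius A := by
  refine le_csSup ⟨‖toCLM A‖, ?_⟩ ⟨x, hx, rfl⟩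
  rintro _ ⟨y, hy, rfl⟩
  calc ‖⟪y, toCLM A y⟫_ℂ‖ ≤ ‖y‖ * (‖toCLM A‖ * ‖y‖) :=
        (norm_inner_le_norm _ _).trans (by gcongr; exact (toCLM A).le_opNorm y)
    _ = ‖toCLM A‖ := by rw [hy, one_mul, mul_one]

theorem opNorm_pos {n : ℕ} {A : Matrix (Fin n) (Fin n) ℂ} (hA : A ≠ 0) : 0 < opNorm A :=
  norm_pos_iff.mpr (AddEquivClass.map_ne_zero_iff.mpr hA)

theorem stmt12 {n : ℕ} (A : Matrix (Fin n) (Fin n) ℂ) (hA : A ≠ 0)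
    (h : opNorm A = 2 * numRadius A)
    (v : EuclideanSpace ℂ (Fin n)) (hv : ‖v‖ = 1) (hvmax : ‖toCLM A v‖ = opNorm A * ‖v‖)
    (u : EuclideanSpace ℂ (Fin n)) (hu : u = (opNorm A)⁻¹ • toCLM A v)
    (α β : ℝ) (z : EuclideanSpace ℂ (Fin n))
    (hzdef : z = ((Real.sqrt 2 : ℂ))⁻¹ •
      (Complex.exp ((α : ℂ) * Complex.I) • v + Complex.exp ((β : ℂ) * Complex.I) • u)) :
    ‖z‖ = 1 ∧ ‖⟪z, toCLM A z⟫_ℂ‖ = numRadius A ∧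
    ((Real.sqrt 2 : ℂ))⁻¹ • Complex.exp ((α : ℂ) * Complex.I) • v ∈
      LinearMap.range (ContinuousLinearMap.adjoint (toCLM A)).toLinearMap ∧
    z - ((Real.sqrt 2 : ℂ))⁻¹ • Complex.exp ((α : ℂ) * Complex.I) • v ∈
      LinearMap.ker (toCLM A).toLinearMap ∧
    ⟪Complex.exp ((α : ℂ) * Complex.I) • v,
      toCLM A (Complex.exp ((α : ℂ) * Complex.I) • v)⟫_ℂ = 0 := by
  have hN := opNorm_pos hA
  have hr : (2 * numRadius A : ℂ) = opNorm A := by rw [h]; push_cast; rfl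
  have hu1 : ‖u‖ = 1 := by
    rw [hu, norm_smul, hvmax, hv, mul_one, norm_inv, Real.norm_of_nonneg hN.le,
      inv_mul_cancel₀ hN.ne']
  have hTv : toCLM A v = (2 * numRadius A : ℂ) • u := by
    rw [hr, hu, ← Complex.coe_smul, smul_smul, ← Complex.ofReal_mul,
      mul_inv_cancel₀ hN.ne', Complex.ofReal_one, one_smul]
  obtain ⟨hTu, hT'v, hT'u⟩ := ContinuousLinearMap.apply_eq_zero_of_apply_eq_two_mul_smul
    (ContinuousLinearMap.norm_inner_apply_le_mul_sq_of_norm_eq_one fun _ =>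
      norm_inner_toCLM_le_numRadius A) hv hu1 hTv
  have hvTv : ⟪v, toCLM A v⟫_ℂ = 0 := by
    rw [← ContinuousLinearMap.adjoint_inner_left, hT'v, inner_zero_left]
  have hvu : ⟪v, u⟫_ℂ = 0 := by
    rw [hTv, inner_smul_right, hr] at hvTv
    exact (mul_eq_zero.mp hvTv).resolve_left (by exact_mod_cast hN.ne')
  have ha := Complex.norm_exp_ofReal_mul_I α
  have hb := Complex.norm_exp_ofReal_mul_I β
  refine ⟨hzdef ▸ ContinuousLinearMap.norm_inv_sqrt_two_smul_add_smul hv hu1 hvu ha hb, ?_,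
    ⟨((Real.sqrt 2 : ℂ))⁻¹ • Complex.exp ((α : ℂ) * Complex.I) • (2 * numRadius A : ℂ)⁻¹ • u,
      ?_⟩, ?_, ?_⟩
  · rw [hzdef, ContinuousLinearMap.norm_inner_inv_sqrt_two_smul_add_smul_apply hu1 hvu hTv hTu
      ha hb, hr, Complex.norm_real, Real.norm_of_nonneg hN.le, h]
    ring
  · rw [ContinuousLinearMap.coe_coe, map_smul, map_smul, map_smul, hT'u,
      inv_smul_smul₀ (hr ▸ by exact_mod_cast hN.ne')]
  · rw [LinearMap.mem_ker, ContinuousLinearMap.coe_coe, hzdef, smul_add, add_sub_cancel_left,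
      map_smul, map_smul, hTu, smul_zero, smul_zero]
  · rw [map_smul, inner_smul_left, inner_smul_right, hvTv, mul_zero, mul_zero]
end

section
/- If A ∈ ℂ^{n×n} is half-radial, then ‖A* + A‖ = ‖A‖. -/
/-!
Let `w` be the numerical radius of `T`. The self-adjoint operator `T* + T` has quadratic form
`2 Re ⟪T z, z⟫`, so `‖T* + T‖ ≤ 2w`. Conversely, complex polarization writes `4 Re ⟪T x, y⟫` as
`Re q(x + y) - Re q(x - y)` plus the two rotated terms `Re (∓ i q(x ± i y))`, where
`q z = ⟪T z, z⟫`; the rotated terms are at most `w ‖x ± i y‖²`, and the first two are controlled by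
`T* + T`. For unit `x, y` this gives `2 ‖T‖ ≤ ‖T* + T‖ + 2w`, so for half-radial `T`, where
`‖T‖ = 2w`, both bounds are equalities.
-/

open scoped InnerProductSpace

namespace ContinuousLinearMap

variable {E : Type*} [NormedAddCommGroup E] [InnerProductSpace ℂ E]

lemma norm_inner_apply_self_le (T : E →L[ℂ] E) (z : E) : ‖⟪T z, z⟫_ℂ‖ ≤ ‖T‖ * ‖z‖ ^ 2 :=
  calc ‖⟪T z, z⟫_ℂ‖ ≤ ‖T z‖ * ‖z‖ := norm_inner_le_norm _ _
    _ ≤ ‖T‖ * ‖z‖ * ‖z‖ := by gcongr; exact T.le_opNorm z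
    _ = ‖T‖ * ‖z‖ ^ 2 := by ring

lemma re_inner_star_add_self_apply_self [CompleteSpace E] (T : E →L[ℂ] E) (z : E) :
    (⟪(star T + T) z, z⟫_ℂ).re = 2 * (⟪T z, z⟫_ℂ).re := by
  rw [add_apply, inner_add_left, star_eq_adjoint, adjoint_inner_left, ← inner_conj_symm z,
    Complex.add_re, Complex.conj_re]
  ring

variable {T : E →L[ℂ] E} {w : ℝ}

lemma norm_star_add_self_le [CompleteSpace E] (hw₀ : 0 ≤ w)
    (hw : ∀ z, ‖⟪T z, z⟫_ℂ‖ ≤ w * ‖z‖ ^ 2) : ‖star T + T‖ ≤ 2 * w := by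
  rw [norm_eq_iSup_rayleighQuotient _ (IsSelfAdjoint.star_add_self T).isSymmetric]
  refine ciSup_le fun z => ?_
  rw [rayleighQuotient, reApplyInnerSelf_apply, RCLike.re_to_complex,
    re_inner_star_add_self_apply_self, abs_div, abs_mul, abs_two, abs_sq]
  rcases eq_or_ne z 0 with rfl | hz
  · simpa using hw₀
  rw [div_le_iff₀ (by positivity), mul_assoc]
  gcongr
  exact (Complex.abs_re_le_norm _).trans (hw z)

lemma four_mul_re_inner_le (hw : ∀ z, ‖⟪T z, z⟫_ℂ‖ ≤ w * ‖z‖ ^ 2) (x y : E) :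
    4 * (⟪T x, y⟫_ℂ).re ≤ (⟪T (x + y), x + y⟫_ℂ).re - (⟪T (x - y), x - y⟫_ℂ).re
      + 2 * w * (‖x‖ ^ 2 + ‖y‖ ^ 2) := by
  have hrot : ∀ u : ℂ, ‖u‖ = 1 → ∀ z, (u * ⟪T z, z⟫_ℂ).re ≤ w * ‖z‖ ^ 2 := fun u hu z =>
    calc (u * ⟪T z, z⟫_ℂ).re ≤ ‖u * ⟪T z, z⟫_ℂ‖ := Complex.re_le_norm _
      _ ≤ w * ‖z‖ ^ 2 := by rw [norm_mul, hu, one_mul]; exact hw z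
  have hpar : w * ‖x + Complex.I • y‖ ^ 2 + w * ‖x - Complex.I • y‖ ^ 2
      = 2 * w * (‖x‖ ^ 2 + ‖y‖ ^ 2) := by
    rw [← mul_add, parallelogram_law_with_norm ℂ, norm_smul, Complex.norm_I, one_mul]; ring
  have hpol := congrArg Complex.re (inner_map_polarization' T.toLinearMap x y)
  simp only [coe_coe, Complex.div_ofNat_re, Complex.add_re, Complex.sub_re] at hpol
  have h₁ := hrot (-Complex.I) (by simp) (x + Complex.I • y)
  have h₂ := hrot Complex.I (by simp) (x - Complex.I • y)
  simp only [neg_mul, Complex.neg_re] at h₁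
  linarith

lemma two_mul_norm_le_norm_star_add_self_add [CompleteSpace E] (hw₀ : 0 ≤ w)
    (hw : ∀ z, ‖⟪T z, z⟫_ℂ‖ ≤ w * ‖z‖ ^ 2) : 2 * ‖T‖ ≤ ‖star T + T‖ + 2 * w := by
  have hH : ∀ z, |(⟪(star T + T) z, z⟫_ℂ).re| ≤ ‖star T + T‖ * ‖z‖ ^ 2 := fun z =>
    (Complex.abs_re_le_norm _).trans (norm_inner_apply_self_le _ z)
  suffices ‖T‖ ≤ (‖star T + T‖ + 2 * w) / 2 by linarith
  refine opNorm_le_of_re_inner_le (by positivity) fun x y hx hy => ?_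
  have h_add := (abs_le.1 (hH (x + y))).2
  have h_sub := (abs_le.1 (hH (x - y))).1
  rw [re_inner_star_add_self_apply_self] at h_add h_sub
  have hpar : ‖star T + T‖ * ‖x + y‖ ^ 2 + ‖star T + T‖ * ‖x - y‖ ^ 2 = 4 * ‖star T + T‖ := by
    rw [← mul_add, parallelogram_law_with_norm ℂ, hx, hy]; ring
  have hpol := four_mul_re_inner_le hw x y
  rw [hx, hy] at hpol
  rw [RCLike.re_to_complex]
  linarith

end ContinuousLinearMap

lemma toCLM_conjTranspose_add {n : ℕ} (A : Matrix (Fin n) (Fin n) ℂ) :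
    toCLM (A.conjTranspose + A) = star (toCLM A) + toCLM A := by
  rw [toCLM, ← Matrix.star_eq_conjTranspose, map_add, map_star]
  rfl

lemma norm_inner_toCLM_self_le {n : ℕ} (A : Matrix (Fin n) (Fin n) ℂ)
    (z : EuclideanSpace ℂ (Fin n)) : ‖⟪toCLM A z, z⟫_ℂ‖ ≤ numRadius A * ‖z‖ ^ 2 := by
  rcases eq_or_ne z 0 with rfl | hz
  · simp
  have hz' : 0 < ‖z‖ := norm_pos_iff.2 hz
  set u := ((‖z‖⁻¹ : ℝ) : ℂ) • z
  have hu : ‖u‖ = 1 := by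
    rw [norm_smul, Complex.norm_real, norm_inv, norm_norm, inv_mul_cancel₀ hz'.ne']
  have hbdd : BddAbove {r : ℝ | ∃ v : EuclideanSpace ℂ (Fin n), ‖v‖ = 1 ∧
      r = ‖⟪v, toCLM A v⟫_ℂ‖} := by
    refine ⟨‖toCLM A‖, ?_⟩
    rintro _ ⟨v, hv, rfl⟩
    simpa [norm_inner_symm, hv] using (toCLM A).norm_inner_apply_self_le v
  have hu_le : ‖⟪u, toCLM A u⟫_ℂ‖ ≤ numRadius A := le_csSup hbdd ⟨u, hu, rfl⟩
  have hu_eq : ‖⟪u, toCLM A u⟫_ℂ‖ = ‖z‖⁻¹ ^ 2 * ‖⟪toCLM A z, z⟫_ℂ‖ := by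
    rw [map_smul, inner_smul_left, inner_smul_right, norm_mul, norm_mul, Complex.norm_conj,
      Complex.norm_real, norm_inv, norm_norm, norm_inner_symm]
    ring
  calc ‖⟪toCLM A z, z⟫_ℂ‖ = ‖⟪u, toCLM A u⟫_ℂ‖ * ‖z‖ ^ 2 := by rw [hu_eq]; field_simp
    _ ≤ numRadius A * ‖z‖ ^ 2 := by gcongr

theorem stmt14_general {n : ℕ} (A : Matrix (Fin n) (Fin n) ℂ)
    (h : opNorm A = 2 * numRadius A) :
    opNorm (A.conjTranspose + A) = opNorm A := by
  have hw := norm_inner_toCLM_self_le A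
  unfold opNorm at h ⊢
  have hw₀ : 0 ≤ numRadius A := by linarith [norm_nonneg (toCLM A)]
  rw [toCLM_conjTranspose_add]
  apply le_antisymm
  · linarith [ContinuousLinearMap.norm_star_add_self_le hw₀ hw]
  · linarith [ContinuousLinearMap.two_mul_norm_le_norm_star_add_self_add hw₀ hw]

theorem stmt14 {n : ℕ} (A : Matrix (Fin n) (Fin n) ℂ) (hA : A ≠ 0)
    (h : opNorm A = 2 * numRadius A) :
    opNorm (A.conjTranspose + A) = opNorm A :=
  stmt14_general A h
end

section
/- Let n > 1 and let C_n be the (n+1)×(n+1) Crabb-Choi-Crouzeix matrix with superdiagonal entries (√2, 1, 1, ..., 1, √2) and zeros elsewhere. Then C_n^n = 2·e₁·e_{n+1}^T, and consequently ‖C_n^n‖ = 2·r(C_n^n), i.e., C_n^n is half-radial. -/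
/-!
`C_n` is a weighted shift, so `C_n ^ k` lives on the `k`-th superdiagonal with entries the
products of `k` consecutive weights; for `k = n` only the corner entry `√2 · 1 ⋯ 1 · √2 = 2`
survives. For `A = c e_i e_jᵀ` with `i ≠ j` we have `‖A‖ = |c|`, while for unit `z`,
`|⟪z, A z⟫| = |c| |z_i| |z_j| ≤ |c| / 2` by AM-GM, with equality at `z = (e_i + e_j) / √2`.
-/

open scoped InnerProductSpace

noncomputable def CCC (n : ℕ) : Matrix (Fin (n + 1)) (Fin (n + 1)) ℂ :=
  Matrix.of fun i j => if (i : ℕ) + 1 = (j : ℕ) then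
    (if n = 1 then 2 else if (i : ℕ) = 0 ∨ (j : ℕ) = n then (Real.sqrt 2 : ℂ) else 1) else 0

section WeightedShift

variable {R : Type*} [CommSemiring R] {m : ℕ}

def weightedShift (m : ℕ) (w : ℕ → R) : Matrix (Fin m) (Fin m) R :=
  Matrix.of fun i j => if (i : ℕ) + 1 = j then w i else 0

theorem weightedShift_pow (w : ℕ → R) (k : ℕ) :
    weightedShift m w ^ k = Matrix.of fun i j : Fin m =>
      if (i : ℕ) + k = j then ∏ t ∈ Finset.range k, w (i + t) else 0 := by
  induction k with
  | zero => ext i j; simp [Matrix.one_apply, Fin.ext_iff]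
  | succ k ih =>
    ext i j
    rw [pow_succ, Matrix.mul_apply, ih]
    simp only [weightedShift, Matrix.of_apply, ite_mul, zero_mul]
    by_cases hik : (i : ℕ) + k < m
    · rw [Finset.sum_eq_single ⟨i + k, hik⟩ (fun l _ hl => if_neg fun h => hl (Fin.ext h.symm))
        (fun h => absurd (Finset.mem_univ _) h), if_pos rfl, mul_ite, mul_zero,
        Finset.prod_range_succ, ← add_assoc]
    · rw [if_neg (by omega), Finset.sum_eq_zero fun l _ => if_neg (by omega)]

theorem weightedShift_pow_self (n : ℕ) (w : ℕ → R) :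
    weightedShift (n + 1) w ^ n = Matrix.single 0 (Fin.last n) (∏ t ∈ Finset.range n, w t) := by
  ext i j
  rw [weightedShift_pow, Matrix.of_apply, Matrix.single_apply]
  have hdiag : (i : ℕ) + n = j ↔ 0 = i ∧ Fin.last n = j := by
    simp only [Fin.ext_iff, Fin.val_zero, Fin.val_last]; omega
  simp only [hdiag]
  split_ifs with h
  · rw [← h.1, Fin.val_zero]; simp
  · rfl

end WeightedShift

noncomputable def cccWeight (n t : ℕ) : ℂ := if t = 0 ∨ t + 1 = n then (√2 : ℂ) else 1

theorem CCC_eq_weightedShift {n : ℕ} (hn : n ≠ 1) :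
    CCC n = weightedShift (n + 1) (cccWeight n) := by
  ext i j
  simp only [CCC, weightedShift, cccWeight, Matrix.of_apply, if_neg hn]
  split_ifs <;> first | rfl | omega

theorem prod_range_cccWeight {n : ℕ} (hn : 1 < n) : ∏ t ∈ Finset.range n, cccWeight n t = 2 := by
  have hsupport : (Finset.range n).filter (fun t => t = 0 ∨ t + 1 = n) = {0, n - 1} := by
    ext t
    simp only [Finset.mem_filter, Finset.mem_range, Finset.mem_insert, Finset.mem_singleton]
    omega
  unfold cccWeight
  rw [Finset.prod_ite, hsupport, Finset.prod_const_one, mul_one, Finset.prod_const,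
    Finset.card_pair (by omega), ← Complex.ofReal_pow, Real.sq_sqrt zero_le_two]
  norm_num

section SingleEntry

variable {m : ℕ}

open ComplexConjugate

theorem toCLM_single (i j : Fin m) (c : ℂ) :
    toCLM (Matrix.single i j c) =
      (innerSL ℂ (EuclideanSpace.single j 1)).smulRight (EuclideanSpace.single i c) := by
  ext z k
  simp only [toCLM, Matrix.ofLp_toEuclideanCLM, Matrix.single_mulVec,
    ContinuousLinearMap.smulRight_apply, innerSL_apply_apply,
    EuclideanSpace.inner_single_left, map_one, one_mul, PiLp.smul_apply,
    PiLp.single_apply, Function.update_apply, smul_eq_mul]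
  split_ifs <;> simp [mul_comm]

theorem opNorm_single (i j : Fin m) (c : ℂ) : opNorm (Matrix.single i j c) = ‖c‖ := by
  rw [opNorm, toCLM_single, ContinuousLinearMap.norm_smulRight_apply, innerSL_apply_norm,
    PiLp.norm_single, PiLp.norm_single, norm_one, one_mul]

theorem inner_toCLM_single (i j : Fin m) (c : ℂ) (z : EuclideanSpace ℂ (Fin m)) :
    ⟪z, toCLM (Matrix.single i j c) z⟫_ℂ = z j * conj (z i) * c := by
  rw [toCLM_single, ContinuousLinearMap.smulRight_apply, innerSL_apply_apply,
    inner_smul_right, EuclideanSpace.inner_single_left, EuclideanSpace.inner_single_right,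
    map_one, one_mul, mul_comm c, mul_assoc]

theorem EuclideanSpace.norm_sq_add_norm_sq_le {𝕜 ι : Type*} [RCLike 𝕜] [Fintype ι] {i j : ι}
    (hij : i ≠ j) (z : EuclideanSpace 𝕜 ι) : ‖z i‖ ^ 2 + ‖z j‖ ^ 2 ≤ ‖z‖ ^ 2 := by
  classical
  rw [EuclideanSpace.norm_sq_eq, ← Finset.sum_pair (f := fun k => ‖z k‖ ^ 2) hij]
  exact Finset.sum_le_sum_of_subset_of_nonneg (Finset.subset_univ _) fun _ _ _ => sq_nonneg _

theorem norm_inner_toCLM_single_le {i j : Fin m} (hij : i ≠ j) (c : ℂ)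
    {z : EuclideanSpace ℂ (Fin m)} (hz : ‖z‖ = 1) :
    ‖⟪z, toCLM (Matrix.single i j c) z⟫_ℂ‖ ≤ ‖c‖ / 2 := by
  have hsq := EuclideanSpace.norm_sq_add_norm_sq_le hij z
  rw [hz, one_pow] at hsq
  rw [inner_toCLM_single, norm_mul, norm_mul, Complex.norm_conj]
  have hamgm : ‖z j‖ * ‖z i‖ ≤ 1 / 2 := by nlinarith [two_mul_le_add_sq ‖z j‖ ‖z i‖]
  calc ‖z j‖ * ‖z i‖ * ‖c‖ ≤ 1 / 2 * ‖c‖ := by gcongr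
    _ = ‖c‖ / 2 := by ring

theorem exists_norm_inner_toCLM_single_eq {i j : Fin m} (hij : i ≠ j) (c : ℂ) :
    ∃ z : EuclideanSpace ℂ (Fin m), ‖z‖ = 1 ∧ ‖⟪z, toCLM (Matrix.single i j c) z⟫_ℂ‖ = ‖c‖ / 2 := by
  set a : ℝ := √2 / 2
  have ha : a ^ 2 = 1 / 2 := by rw [div_pow, Real.sq_sqrt zero_le_two]; norm_num
  refine ⟨EuclideanSpace.single i (a : ℂ) + EuclideanSpace.single j (a : ℂ), ?_, ?_⟩
  · have horth : ⟪EuclideanSpace.single i (a : ℂ), EuclideanSpace.single j (a : ℂ)⟫_ℂ = 0 := by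
      simp [EuclideanSpace.inner_single_left, hij.symm]
    rw [← pow_eq_one_iff_of_nonneg (norm_nonneg _) two_ne_zero, sq,
      norm_add_sq_eq_norm_sq_add_norm_sq_of_inner_eq_zero _ _ horth]
    simp only [PiLp.norm_single, Complex.norm_real, Real.norm_eq_abs, ← sq, sq_abs]
    linarith
  · rw [inner_toCLM_single]
    simp only [PiLp.add_apply, ne_eq, hij.symm, not_false_eq_true, PiLp.single_eq_of_ne,
      PiLp.single_eq_same, zero_add, hij, add_zero, Complex.conj_ofReal, ← Complex.ofReal_mul,
      norm_mul, Complex.norm_real, Real.norm_eq_abs, abs_of_nonneg (show 0 ≤ a by positivity)]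
    rw [← sq, ha]
    ring

theorem numRadius_single {i j : Fin m} (hij : i ≠ j) (c : ℂ) :
    numRadius (Matrix.single i j c) = ‖c‖ / 2 := by
  obtain ⟨z, hz, hval⟩ := exists_norm_inner_toCLM_single_eq hij c
  refine IsGreatest.csSup_eq ⟨⟨z, hz, hval.symm⟩, ?_⟩
  rintro _ ⟨w, hw, rfl⟩
  exact norm_inner_toCLM_single_le hij c hw

end SingleEntry

theorem stmt18 {n : ℕ} (hn : 1 < n) :
    CCC n ^ n = Matrix.single (0 : Fin (n + 1)) (Fin.last n) (2 : ℂ) ∧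
    opNorm (CCC n ^ n) = 2 * numRadius (CCC n ^ n) := by
  have hpow : CCC n ^ n = Matrix.single (0 : Fin (n + 1)) (Fin.last n) (2 : ℂ) := by
    rw [CCC_eq_weightedShift hn.ne', weightedShift_pow_self, prod_range_cccWeight hn]
  have hcorner : (0 : Fin (n + 1)) ≠ Fin.last n := by
    simp only [ne_eq, Fin.ext_iff, Fin.val_zero, Fin.val_last]
    omega
  refine ⟨hpow, ?_⟩
  rw [hpow, opNorm_single, numRadius_single hcorner]
  ring
end

section
/- Let A ∈ ℂ^{(n+1)×(n+1)} be nonzero and 1 ≤ k ≤ n. If A is unitarily similar to r(A)·(C_k ⊕ B) where C_k is the Crabb-Choi-Crouzeix matrix, r(B) ≤ 1, and ‖B^k‖ ≤ 2, then ‖A^k‖ = 2·sup_{ζ ∈ W(A)} |ζ^k| = 2·r(A)^k. -/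
open scoped InnerProductSpace

/-!
Raising `A = r • Q (C_k ⊕ B) Q*` (with `r = r(A)`) to the `k`-th power kills every entry of the
nilpotent shift `C_k` except the product of its superdiagonal, `√2 · 1 ⋯ 1 · √2 = 2`, in the corner
`(0, k)`. So `A^k` is unitarily similar to `r^k (2 E₀ₖ ⊕ B^k)`, whose operator norm is
`r^k max(2, ‖B^k‖) = 2 r^k`. Since `t ↦ t^k` is monotone and continuous on `[0, ∞)`, the supremum
of `|ζ|^k` over `W(A)` is `r^k`.
-/

open Matrix WithLp
open scoped Matrix.Norms.L2Operator

lemma EuclideanSpace.norm_sq_eq_inl_add_inr {𝕜 : Type*} [RCLike 𝕜] {l m : Type*} [Fintype l]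
    [Fintype m] (v : EuclideanSpace 𝕜 (l ⊕ m)) :
    ‖v‖ ^ 2 = ‖toLp 2 (ofLp v ∘ Sum.inl)‖ ^ 2 + ‖toLp 2 (ofLp v ∘ Sum.inr)‖ ^ 2 := by
  simp [EuclideanSpace.norm_sq_eq, Fintype.sum_sum_type]

theorem Real.sSup_image_pow_of_nonneg {S : Set ℝ} (hne : S.Nonempty) (hbdd : BddAbove S)
    (hS : ∀ s ∈ S, 0 ≤ s) (k : ℕ) : sSup ((· ^ k) '' S) = sSup S ^ k :=
  (MonotoneOn.map_csSup_of_continuousWithinAt (continuous_pow k).continuousWithinAt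
    (fun _ ha _ _ hab ↦ pow_le_pow_left₀ (hS _ ha) hab k) hne hbdd).symm

namespace Matrix

theorem pow_apply_of_superdiagonal {R : Type*} [CommSemiring R] {K : ℕ}
    {M : Matrix (Fin K) (Fin K) R} {w : ℕ → R}
    (hM : ∀ i j : Fin K, M i j = if (i : ℕ) + 1 = j then w i else 0) (m : ℕ) (i j : Fin K) :
    (M ^ m) i j = if (i : ℕ) + m = j then ∏ t ∈ Finset.range m, w (i + t) else 0 := by
  induction m generalizing j with
  | zero => simp [one_apply, Fin.ext_iff]
  | succ m ih =>
    simp_rw [pow_succ, mul_apply, ih, hM, ite_mul, zero_mul, mul_ite, mul_zero]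
    by_cases h : (i : ℕ) + (m + 1) = j
    · rw [Finset.sum_eq_single ⟨i + m, by omega⟩, if_pos rfl,
        if_pos (by omega : (i : ℕ) + m + 1 = j), if_pos h, Finset.prod_range_succ]
      · intro l _ hl
        rw [if_neg (fun h' ↦ hl (Fin.ext h'.symm))]
      · simp
    · rw [if_neg h]
      refine Finset.sum_eq_zero fun l _ ↦ ?_
      split_ifs <;> first | rfl | omega

variable {𝕜 : Type*} [RCLike 𝕜] {l m : Type*} [Fintype l] [Fintype m] [DecidableEq l]
  [DecidableEq m]

/-- `(single i j c)ᴴ * single i j c` is diagonal with the single entry `‖c‖²`, so the C⋆-identity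
gives the norm. -/
lemma l2_opNorm_single (i : l) (j : m) (c : 𝕜) : ‖single i j c‖ = ‖c‖ := by
  have h := l2_opNorm_conjTranspose_mul_self (single i j c)
  rw [conjTranspose_single, single_mul_single_same, ← diagonal_single, l2_opNorm_diagonal,
    Pi.norm_single, norm_mul, norm_star] at h
  exact (mul_self_inj (norm_nonneg _) (norm_nonneg _)).mp h.symm

lemma toEuclideanCLM_reindex (e : l ≃ m) (A : Matrix l l 𝕜) :
    toEuclideanCLM (𝕜 := 𝕜) (reindex e e A) =
      (LinearIsometryEquiv.piLpCongrLeft 2 𝕜 𝕜 e : EuclideanSpace 𝕜 l →L[𝕜] EuclideanSpace 𝕜 m) ∘L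
        toEuclideanCLM (𝕜 := 𝕜) A ∘L
        (LinearIsometryEquiv.piLpCongrLeft 2 𝕜 𝕜 e.symm :
          EuclideanSpace 𝕜 m →L[𝕜] EuclideanSpace 𝕜 l) := by
  ext v i
  simp [mulVec, dotProduct, Equiv.piCongrLeft', ← e.sum_comp]

lemma l2_opNorm_reindex (e : l ≃ m) (A : Matrix l l 𝕜) : ‖reindex e e A‖ = ‖A‖ := by
  rw [cstar_norm_def, cstar_norm_def, toEuclideanCLM_reindex,
    ContinuousLinearMap.opNorm_linearIsometryEquiv_comp,
    ContinuousLinearMap.opNorm_comp_linearIsometryEquiv]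

lemma norm_sq_toEuclideanCLM_fromBlocks (A : Matrix l l 𝕜) (D : Matrix m m 𝕜)
    (v : EuclideanSpace 𝕜 (l ⊕ m)) :
    ‖toEuclideanCLM (𝕜 := 𝕜) (fromBlocks A 0 0 D) v‖ ^ 2 =
      ‖toEuclideanCLM (𝕜 := 𝕜) A (toLp 2 (ofLp v ∘ Sum.inl))‖ ^ 2 +
        ‖toEuclideanCLM (𝕜 := 𝕜) D (toLp 2 (ofLp v ∘ Sum.inr))‖ ^ 2 := by
  simp [EuclideanSpace.norm_sq_eq, Fintype.sum_sum_type, fromBlocks_mulVec]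

lemma l2_opNorm_le_fromBlocks_zero_zero (A : Matrix l l 𝕜) (D : Matrix m m 𝕜) :
    ‖A‖ ≤ ‖fromBlocks A 0 0 D‖ := by
  rw [cstar_norm_def, cstar_norm_def]
  refine (toEuclideanCLM (𝕜 := 𝕜) A).opNorm_le_bound (norm_nonneg _)
    fun w ↦ (sq_le_sq₀ (by positivity) (by positivity)).mp ?_
  have h := pow_le_pow_left₀ (norm_nonneg _)
    ((toEuclideanCLM (𝕜 := 𝕜) (fromBlocks A 0 0 D)).le_opNorm (toLp 2 (Sum.elim (ofLp w) 0))) 2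
  rw [norm_sq_toEuclideanCLM_fromBlocks, mul_pow, EuclideanSpace.norm_sq_eq_inl_add_inr] at h
  simpa [mul_pow] using h

lemma l2_opNorm_fromBlocks_zero_zero (A : Matrix l l 𝕜) (D : Matrix m m 𝕜) :
    ‖fromBlocks A 0 0 D‖ = max ‖A‖ ‖D‖ := by
  have hswap : ‖fromBlocks D 0 0 A‖ = ‖fromBlocks A 0 0 D‖ := by
    rw [← l2_opNorm_reindex (Equiv.sumComm l m) (fromBlocks A 0 0 D)]
    simp
  refine le_antisymm ?_ (max_le (l2_opNorm_le_fromBlocks_zero_zero A D)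
    (hswap ▸ l2_opNorm_le_fromBlocks_zero_zero D A))
  rw [cstar_norm_def, cstar_norm_def, cstar_norm_def]
  set TA := toEuclideanCLM (𝕜 := 𝕜) A
  set TD := toEuclideanCLM (𝕜 := 𝕜) D
  refine (toEuclideanCLM (𝕜 := 𝕜) (fromBlocks A 0 0 D)).opNorm_le_bound (by positivity)
    fun v ↦ (sq_le_sq₀ (by positivity) (by positivity)).mp ?_
  set vA : EuclideanSpace 𝕜 l := toLp 2 (ofLp v ∘ Sum.inl)
  set vD : EuclideanSpace 𝕜 m := toLp 2 (ofLp v ∘ Sum.inr)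
  have hA : ‖TA vA‖ ≤ max ‖TA‖ ‖TD‖ * ‖vA‖ :=
    (TA.le_opNorm vA).trans (by gcongr; exact le_max_left _ _)
  have hD : ‖TD vD‖ ≤ max ‖TA‖ ‖TD‖ * ‖vD‖ :=
    (TD.le_opNorm vD).trans (by gcongr; exact le_max_right _ _)
  rw [norm_sq_toEuclideanCLM_fromBlocks, mul_pow, EuclideanSpace.norm_sq_eq_inl_add_inr]
  nlinarith [pow_le_pow_left₀ (norm_nonneg _) hA 2, pow_le_pow_left₀ (norm_nonneg _) hD 2]

end Matrix

noncomputable def CCC.weight (k t : ℕ) : ℂ :=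
  if k = 1 then 2 else if t = 0 ∨ t + 1 = k then (Real.sqrt 2 : ℂ) else 1

theorem CCC_apply (k : ℕ) (i j : Fin (k + 1)) :
    CCC k i j = if (i : ℕ) + 1 = j then CCC.weight k i else 0 := by
  simp only [CCC, CCC.weight, of_apply]
  split_ifs <;> first | rfl | omega

theorem prod_range_CCC_weight {k : ℕ} (hk : 1 ≤ k) :
    ∏ t ∈ Finset.range k, CCC.weight k t = 2 := by
  obtain rfl | ⟨j, rfl⟩ : k = 1 ∨ ∃ j, k = j + 2 := by
    rcases k with _ | _ | j <;> simp_all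
  · simp [CCC.weight]
  · have hmid : ∏ t ∈ Finset.range j, CCC.weight (j + 2) (t + 1) = 1 :=
      Finset.prod_eq_one fun t ht ↦ by
        rw [Finset.mem_range] at ht
        rw [CCC.weight, if_neg (by omega), if_neg (by omega)]
    rw [Finset.prod_range_succ, Finset.prod_range_succ', hmid]
    simp [CCC.weight, ← Complex.ofReal_mul]

theorem CCC_pow_self {k : ℕ} (hk : 1 ≤ k) : CCC k ^ k = single 0 (Fin.last k) 2 := by
  ext i j
  rw [pow_apply_of_superdiagonal (CCC_apply k) k i j, single_apply]
  by_cases h : (i : ℕ) + k = j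
  · have hj := j.isLt
    obtain rfl : i = 0 := Fin.ext (by rw [Fin.val_zero]; omega)
    obtain rfl : j = Fin.last k := Fin.ext (by rw [Fin.val_zero] at h; rw [Fin.val_last]; omega)
    simp [prod_range_CCC_weight hk]
  · rw [if_neg h, if_neg]
    rintro ⟨rfl, rfl⟩
    simp at h

section NumericalRadius

variable {N : ℕ} (A : Matrix (Fin N) (Fin N) ℂ)

theorem numRadius_nonneg : 0 ≤ numRadius A :=
  Real.sSup_nonneg (by rintro _ ⟨z, -, rfl⟩; exact norm_nonneg _)

theorem bddAbove_numRadius_set :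
    BddAbove {r : ℝ | ∃ z : EuclideanSpace ℂ (Fin N), ‖z‖ = 1 ∧ r = ‖⟪z, toCLM A z⟫_ℂ‖} := by
  refine ⟨opNorm A, ?_⟩
  rintro _ ⟨z, hz, rfl⟩
  calc ‖⟪z, toCLM A z⟫_ℂ‖ ≤ ‖z‖ * ‖toCLM A z‖ := norm_inner_le_norm _ _
    _ ≤ ‖z‖ * (‖toCLM A‖ * ‖z‖) := by gcongr; exact (toCLM A).le_opNorm z
    _ = opNorm A := by rw [hz, opNorm]; ring

theorem sSup_norm_inner_pow_eq_numRadius_pow [NeZero N] (k : ℕ) :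
    sSup {r : ℝ | ∃ z : EuclideanSpace ℂ (Fin N), ‖z‖ = 1 ∧ r = ‖⟪z, toCLM A z⟫_ℂ ^ k‖} =
      numRadius A ^ k := by
  set S := {r : ℝ | ∃ z : EuclideanSpace ℂ (Fin N), ‖z‖ = 1 ∧ r = ‖⟪z, toCLM A z⟫_ℂ‖}
  have himage : {r : ℝ | ∃ z : EuclideanSpace ℂ (Fin N), ‖z‖ = 1 ∧ r = ‖⟪z, toCLM A z⟫_ℂ ^ k‖} =
      (· ^ k) '' S := by
    ext r
    simp [S, norm_pow, eq_comm]
  have hne : S.Nonempty := ⟨_, EuclideanSpace.single 0 1, by simp, rfl⟩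
  rw [himage, Real.sSup_image_pow_of_nonneg hne (bddAbove_numRadius_set A)
    (by rintro _ ⟨z, -, rfl⟩; exact norm_nonneg _), numRadius]

end NumericalRadius

theorem stmt19_general {n : ℕ} (A : Matrix (Fin (n + 1)) (Fin (n + 1)) ℂ)
    (k : ℕ) (hk1 : 1 ≤ k)
    (p : ℕ) (B : Matrix (Fin p) (Fin p) ℂ) (e : Fin (n + 1) ≃ Fin (k + 1) ⊕ Fin p)
    (Q : Matrix (Fin (n + 1)) (Fin (n + 1)) ℂ) (hQ : Q ∈ Matrix.unitaryGroup (Fin (n + 1)) ℂ)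
    (hsim : A = numRadius A •
      (Q * (Matrix.reindex e.symm e.symm (Matrix.fromBlocks (CCC k) 0 0 B)) * star Q))
    (hB2 : opNorm (B ^ k) ≤ 2) :
    opNorm (A ^ k) = 2 * sSup {r : ℝ | ∃ z : EuclideanSpace ℂ (Fin (n + 1)),
        ‖z‖ = 1 ∧ r = ‖⟪z, toCLM A z⟫_ℂ ^ k‖} ∧
    opNorm (A ^ k) = 2 * (numRadius A) ^ k := by
  have hpow : A ^ k = numRadius A ^ k •
      (Q * reindex e.symm e.symm (fromBlocks (single 0 (Fin.last k) 2) 0 0 (B ^ k)) * star Q) := by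
    -- `hsim` also mentions `A` inside `numRadius A`, which must stay untouched.
    conv_lhs => rw [hsim]
    rw [smul_pow, ← CCC_pow_self hk1, ← fromBlocks_diagonal_pow, ← coe_reindexRingEquiv, map_pow]
    exact congrArg _ (map_pow (Unitary.conjStarAlgAut ℂ _ ⟨Q, hQ⟩) _ k).symm
  have hnorm : opNorm (A ^ k) = 2 * numRadius A ^ k := by
    change ‖A ^ k‖ = _
    rw [hpow, norm_smul, CStarRing.norm_mul_mem_unitary _ (Unitary.star_mem hQ),
      CStarRing.norm_mem_unitary_mul _ hQ, l2_opNorm_reindex, l2_opNorm_fromBlocks_zero_zero,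
      l2_opNorm_single, Complex.norm_two, max_eq_left (show ‖B ^ k‖ ≤ 2 from hB2),
      Real.norm_of_nonneg (pow_nonneg (numRadius_nonneg A) k), mul_comm]
  exact ⟨by rw [hnorm, sSup_norm_inner_pow_eq_numRadius_pow], hnorm⟩

theorem stmt19 {n : ℕ} (A : Matrix (Fin (n + 1)) (Fin (n + 1)) ℂ) (hA : A ≠ 0)
    (k : ℕ) (hk1 : 1 ≤ k) (hkn : k ≤ n)
    (p : ℕ) (B : Matrix (Fin p) (Fin p) ℂ) (e : Fin (n + 1) ≃ Fin (k + 1) ⊕ Fin p)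
    (Q : Matrix (Fin (n + 1)) (Fin (n + 1)) ℂ) (hQ : Q ∈ Matrix.unitaryGroup (Fin (n + 1)) ℂ)
    (hsim : A = numRadius A •
      (Q * (Matrix.reindex e.symm e.symm (Matrix.fromBlocks (CCC k) 0 0 B)) * star Q))
    (hB1 : numRadius B ≤ 1) (hB2 : opNorm (B ^ k) ≤ 2) :
    opNorm (A ^ k) = 2 * sSup {r : ℝ | ∃ z : EuclideanSpace ℂ (Fin (n + 1)),
        ‖z‖ = 1 ∧ r = ‖⟪z, toCLM A z⟫_ℂ ^ k‖} ∧
    opNorm (A ^ k) = 2 * (numRadius A) ^ k :=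
  stmt19_general A k hk1 p B e Q hQ hsim hB2
end
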